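/- Fix N and a rooted subtree T of T_{N,free} with n := |{j ∈ [N] : the singleton string j ∈ T}| ≥ 2. Then there exists a unique family of coefficients α_{T,π} ∈ ℝ, indexed by non-crossing partitions π of finite totally ordered sets, such that α_{T,π} = 1 whenever |π| = 1, and for all π: α_{T,π} = n^{−|π|} · Σ_{χ ∈ X_w(π,T)} Π_{χ-components π'} α_{T,π'}. Moreover α_{T,π} ≥ 0 for all π. -/

import Mathlib

/-- The alternating reduction of a string: replace each maximal run of
consecutive equal letters by a single occurrence of that letter. -/
def red {α : Type*} [DecidableEq α] : List α → List α
  | [] => []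
  | [a] => [a]
  | a :: b :: t => if a = b then red (b :: t) else a :: red (b :: t)

/-- A rooted subtree of the tree of alternating strings on alphabet `α`. -/
def IsRootedSubtree {α : Type*} (S : Set (List α)) : Prop :=
  (∀ s ∈ S, s.Chain' (· ≠ ·)) ∧ [] ∈ S ∧ ∀ s ∈ S, s.tail ∈ S

/-- Partitions of finite subsets of `ℕ` (finite totally ordered sets, up to
isomorphism), given by their set of blocks. -/
abbrev Blocks : Type := Finset (Finset ℕ)

/-- `π` is a non-crossing partition (of its ground set `⋃ π`). -/
def IsNC (π : Blocks) : Prop :=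
  (∀ B ∈ π, B.Nonempty) ∧
  (∀ B ∈ π, ∀ C ∈ π, B ≠ C → Disjoint B C) ∧
  (∀ B ∈ π, ∀ C ∈ π, B ≠ C →
    ¬ ∃ i₁ j₁ i₂ j₂ : ℕ, i₁ < j₁ ∧ j₁ < i₂ ∧ i₂ < j₂ ∧
      i₁ ∈ B ∧ i₂ ∈ B ∧ j₁ ∈ C ∧ j₂ ∈ C)

/-- `V` is nested inside `W`. -/
def NestedIn (V W : Finset ℕ) : Prop :=
  ∃ j ∈ W, ∃ k ∈ W, ∀ x ∈ V, j < x ∧ x < k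

/-- `V` is immediately nested inside `W` (an edge of the nesting tree of `π`). -/
def ImmNested (π : Blocks) (V W : Finset ℕ) : Prop :=
  NestedIn V W ∧ ¬ ∃ X ∈ π, NestedIn V X ∧ NestedIn X W

/-- Adjacency of blocks in the nesting tree `graph(π)` (away from the root). -/
def AdjBlocks (π : Blocks) (V W : Finset ℕ) : Prop :=
  ImmNested π V W ∨ ImmNested π W V

/-- `V` and `W` lie in the same `χ`-component of `π`: they are joined by a path
in `graph(π) ∖ {∅}` all of whose edges join blocks of the same color. -/
def sameComp {N : ℕ} (π : Blocks) (χ : Finset ℕ → Fin N) (V W : Finset ℕ) : Prop :=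
  Relation.ReflTransGen
    (fun X Y => X ∈ π ∧ Y ∈ π ∧ AdjBlocks π X Y ∧ χ X = χ Y) V W

open Classical in
noncomputable def component {N : ℕ} (π : Blocks) (χ : Finset ℕ → Fin N)
    (V : Finset ℕ) : Finset (Finset ℕ) :=
  π.filter (fun W => sameComp π χ V W)

-- The `χ`-components of `π`.
open Classical in
noncomputable def components {N : ℕ} (π : Blocks) (χ : Finset ℕ → Fin N) :
    Finset Blocks :=
  π.image (fun V => component π χ V)

/-- `L` is the chain of `V` in `π`: the list `(V, V₁, …, V_d)` consisting of `V`
followed by all blocks surrounding `V`, each nested in the next. -/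
def IsChainList (π : Blocks) (V : Finset ℕ) (L : List (Finset ℕ)) : Prop :=
  L.head? = some V ∧ (∀ W, W ∈ L.tail ↔ W ∈ π ∧ NestedIn V W) ∧
  L.Chain' (fun X Y => NestedIn X Y) ∧ L.Nodup

/-- `χ ∈ X_w(π,T)`: for every block `V`, the alternating reduction of the color
string along the chain of `V` lies in `T`. -/
def WeaklyCompatible {N : ℕ} (T : Set (List (Fin N))) (π : Blocks)
    (χ : Finset ℕ → Fin N) : Prop :=
  ∀ V ∈ π, ∀ L : List (Finset ℕ), IsChainList π V L → red (L.map χ) ∈ T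

/-- Extend a coloring of the blocks of `π` by a junk value. -/
def extendColor {N : ℕ} [NeZero N] (π : Blocks)
    (χ : {V : Finset ℕ // V ∈ π} → Fin N) : Finset ℕ → Fin N :=
  fun W => if h : W ∈ π then χ ⟨W, h⟩ else 0

-- The right-hand side of the fixed-point identity for the cumulant
-- coefficients: `n^{−|π|} Σ_{χ ∈ X_w(π,T)} Π_{χ-components π'} a(π')`.
open Classical in
noncomputable def cumulantRHS {N : ℕ} [NeZero N] (n : ℕ) (T : Set (List (Fin N)))
    (a : Blocks → ℝ) (π : Blocks) : ℝ :=
  (∑ χ : ({V : Finset ℕ // V ∈ π} → Fin N),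
      if WeaklyCompatible T π (extendColor π χ) then
        ∏ τ ∈ components π (extendColor π χ), a τ
      else 0) / (n : ℝ) ^ π.card

/-- `a` is a family of cumulant coefficients for `T`: normalized on one-block
partitions, and satisfying the fixed-point identity for all non-crossing `π`. -/
def SatisfiesFP {N : ℕ} [NeZero N] (n : ℕ) (T : Set (List (Fin N)))
    (a : Blocks → ℝ) : Prop :=
  (∀ π : Blocks, IsNC π → π.card = 1 → a π = 1) ∧
  (∀ π : Blocks, IsNC π → a π = cumulantRHS n T a π)

/-!
For `|π| ≥ 2` the colorings in `X_w(π,T)` split into those for which `π` is a single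
`χ`-component and the rest. The former are constant colorings, and the color `c` of such a
coloring satisfies `[c] ∈ T` (read off the chain of an outermost block), so there are at most
`n < n^{|π|}` of them. Every other coloring only involves coefficients of strictly smaller
partitions, so the fixed-point identity can be solved for `α_{T,π}` with the positive
denominator `n^{|π|} - #{connected colorings}`: strong induction on `π` gives existence,
uniqueness and nonnegativity at once. For `|π| = 1` both sides of the identity agree for every
family, since then the only colorings are the `n` admissible constant ones.
-/

open Classical

lemma nestedIn_irrefl (V : Finset ℕ) : ¬ NestedIn V V := by
  rintro ⟨j, hj, _, _, hV⟩
  exact lt_irrefl j (hV j hj).1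

lemma IsNC.subset {π τ : Blocks} (h : IsNC π) (hs : τ ⊆ π) : IsNC τ :=
  ⟨fun B hB => h.1 B (hs hB), fun B hB C hC => h.2.1 B (hs hB) C (hs hC),
    fun B hB C hC => h.2.2 B (hs hB) C (hs hC)⟩

/-- The block containing the largest point is not nested in any other block. -/
lemma exists_outermost_block {π : Blocks} (hne : ∀ B ∈ π, B.Nonempty) (hπ : π.Nonempty) :
    ∃ V ∈ π, ∀ W ∈ π, ¬ NestedIn V W := by
  obtain ⟨V, hV, hmax⟩ := π.exists_max_image (fun B => B.sup id) hπ
  refine ⟨V, hV, fun W hW ⟨_, _, k, hk, hnest⟩ => ?_⟩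
  obtain ⟨x, hx, hxsup⟩ := V.exists_mem_eq_sup (hne V hV) id
  have : V.sup id < W.sup id := hxsup ▸ (hnest x hx).2.trans_le (Finset.le_sup (f := id) hk)
  exact (hmax W hW).not_gt this

lemma isChainList_iff_of_outermost {π : Blocks} {V : Finset ℕ}
    (hV : ∀ W ∈ π, ¬ NestedIn V W) (L : List (Finset ℕ)) :
    IsChainList π V L ↔ L = [V] := by
  constructor
  · rintro ⟨hhead, htail, -, -⟩
    obtain _ | ⟨V', t⟩ := L
    · simp at hhead
    obtain rfl : V' = V := by simpa using hhead
    obtain rfl : t = [] :=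
      List.eq_nil_iff_forall_not_mem.2 fun W hW => hV W ((htail W).1 hW).1 ((htail W).1 hW).2
    rfl
  · rintro rfl
    exact ⟨rfl, fun W => by simpa using hV W, List.isChain_singleton _, List.nodup_singleton _⟩

lemma WeaklyCompatible.singleton_mem {N : ℕ} {T : Set (List (Fin N))} {π : Blocks}
    {χ : Finset ℕ → Fin N} (h : WeaklyCompatible T π χ) {V : Finset ℕ} (hVπ : V ∈ π)
    (hV : ∀ W ∈ π, ¬ NestedIn V W) : [χ V] ∈ T := by
  simpa [red] using h V hVπ [V] ((isChainList_iff_of_outermost hV _).2 rfl)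

lemma weaklyCompatible_singleton_iff {N : ℕ} {T : Set (List (Fin N))} {V : Finset ℕ}
    {χ : Finset ℕ → Fin N} : WeaklyCompatible T {V} χ ↔ [χ V] ∈ T := by
  have hV : ∀ W ∈ ({V} : Blocks), ¬ NestedIn V W := by
    rintro W hW
    rw [Finset.mem_singleton.1 hW]
    exact nestedIn_irrefl V
  refine ⟨fun h => h.singleton_mem (Finset.mem_singleton_self V) hV, fun h V' hV' L hL => ?_⟩
  obtain rfl := Finset.mem_singleton.1 hV'
  rw [(isChainList_iff_of_outermost hV L).1 hL]
  simpa [red] using h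

section Components

variable {N : ℕ} {π : Blocks} {χ : Finset ℕ → Fin N}

lemma sameComp.symm {V W : Finset ℕ} (h : sameComp π χ V W) : sameComp π χ W V := by
  induction h with
  | refl => exact .refl
  | tail _ hstep ih =>
    obtain ⟨hX, hY, hadj, hχ⟩ := hstep
    exact .head ⟨hY, hX, hadj.symm, hχ.symm⟩ ih

lemma sameComp.color_eq {V W : Finset ℕ} (h : sameComp π χ V W) : χ V = χ W := by
  induction h with
  | refl => rfl
  | tail _ hstep ih => exact ih.trans hstep.2.2.2

lemma mem_component {V W : Finset ℕ} : W ∈ component π χ V ↔ W ∈ π ∧ sameComp π χ V W :=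
  Finset.mem_filter

lemma mem_components {τ : Blocks} : τ ∈ components π χ ↔ ∃ V ∈ π, component π χ V = τ :=
  Finset.mem_image

lemma ssubset_of_mem_components {τ : Blocks} (h : π ∉ components π χ)
    (hτ : τ ∈ components π χ) : τ ⊂ π := by
  obtain ⟨V, hV, rfl⟩ := mem_components.1 hτ
  exact Finset.ssubset_iff_subset_ne.2
    ⟨Finset.filter_subset _ _, fun he => h (mem_components.2 ⟨V, hV, he⟩)⟩

lemma exists_sameComp_of_self_mem_components (h : π ∈ components π χ) :
    ∃ V₀, ∀ W ∈ π, sameComp π χ V₀ W := by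
  obtain ⟨V₀, -, hV₀⟩ := mem_components.1 h
  exact ⟨V₀, fun W hW => (mem_component.1 (by rwa [hV₀])).2⟩

lemma color_eq_of_self_mem_components (h : π ∈ components π χ) {V W : Finset ℕ}
    (hV : V ∈ π) (hW : W ∈ π) : χ V = χ W := by
  obtain ⟨V₀, hV₀⟩ := exists_sameComp_of_self_mem_components h
  exact (hV₀ V hV).color_eq.symm.trans (hV₀ W hW).color_eq

lemma components_eq_singleton_self (h : π ∈ components π χ) : components π χ = {π} := by
  obtain ⟨V₀, hV₀⟩ := exists_sameComp_of_self_mem_components h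
  refine Finset.eq_singleton_iff_unique_mem.2 ⟨h, fun τ hτ => ?_⟩
  obtain ⟨W, hW, rfl⟩ := mem_components.1 hτ
  ext X
  rw [mem_component]
  exact ⟨And.left, fun hX =>
    ⟨hX, Relation.ReflTransGen.trans (hV₀ W hW).symm (hV₀ X hX)⟩⟩

lemma self_mem_components_singleton (V : Finset ℕ) :
    ({V} : Blocks) ∈ components {V} χ :=
  mem_components.2 ⟨V, Finset.mem_singleton_self V,
    Finset.filter_true_of_mem fun _ hW => Finset.mem_singleton.1 hW ▸ Relation.ReflTransGen.refl⟩

lemma components_empty : components ∅ χ = ∅ := Finset.image_empty _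

end Components

section Counting

variable {N : ℕ} [NeZero N] (T : Set (List (Fin N)))

noncomputable def connectedCount (π : Blocks) : ℕ :=
  (Finset.univ.filter fun χ : {V : Finset ℕ // V ∈ π} → Fin N =>
    WeaklyCompatible T π (extendColor π χ) ∧ π ∈ components π (extendColor π χ)).card

noncomputable def disconnectedSum (a : Blocks → ℝ) (π : Blocks) : ℝ :=
  ∑ χ : {V : Finset ℕ // V ∈ π} → Fin N,
    if WeaklyCompatible T π (extendColor π χ) ∧ π ∉ components π (extendColor π χ) then
      ∏ τ ∈ components π (extendColor π χ), a τ
    else 0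

noncomputable def cumulantDenom (n : ℕ) (π : Blocks) : ℝ :=
  (n : ℝ) ^ π.card - connectedCount T π

lemma extendColor_of_mem {π : Blocks} (χ : {V : Finset ℕ // V ∈ π} → Fin N) {W : Finset ℕ}
    (h : W ∈ π) : extendColor π χ W = χ ⟨W, h⟩ :=
  dif_pos h

lemma connectedCount_le_ncard {π : Blocks} (hNC : IsNC π) (hπ : π.Nonempty) :
    connectedCount T π ≤ {j : Fin N | [j] ∈ T}.ncard := by
  obtain ⟨V, hV, hout⟩ := exists_outermost_block hNC.1 hπ
  rw [Set.ncard_eq_toFinset_card', Set.toFinset_ofPred, connectedCount]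
  refine Finset.card_le_card_of_injOn (fun χ => χ ⟨V, hV⟩) (fun χ hχ => ?_)
    (fun χ₁ h₁ χ₂ h₂ heq => ?_)
  · simp only [Finset.coe_filter, Finset.mem_univ, true_and, Set.mem_ofPred_eq] at hχ ⊢
    rw [← extendColor_of_mem χ hV]
    exact hχ.1.singleton_mem hV hout
  · simp only [Finset.coe_filter, Finset.mem_univ, true_and, Set.mem_ofPred_eq] at h₁ h₂
    funext ⟨W, hW⟩
    have e₁ := color_eq_of_self_mem_components h₁.2 hW hV
    have e₂ := color_eq_of_self_mem_components h₂.2 hW hV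
    rw [extendColor_of_mem _ hW, extendColor_of_mem _ hV] at e₁ e₂
    rw [e₁, e₂]
    exact heq

lemma connectedCount_singleton (V : Finset ℕ) :
    connectedCount T {V} = {j : Fin N | [j] ∈ T}.ncard := by
  have hV : V ∈ ({V} : Blocks) := Finset.mem_singleton_self V
  rw [Set.ncard_eq_toFinset_card', Set.toFinset_ofPred, connectedCount]
  refine Finset.card_nbij' (fun χ => χ ⟨V, hV⟩) (fun c _ => c) (fun χ hχ => ?_) (fun c hc => ?_)
    (fun χ _ => ?_) (fun c _ => rfl)
  · simp only [Finset.coe_filter, Finset.mem_univ, true_and, Set.mem_ofPred_eq] at hχ ⊢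
    rw [← extendColor_of_mem χ hV]
    exact weaklyCompatible_singleton_iff.1 hχ.1
  · simp only [Finset.coe_filter, Finset.mem_univ, true_and, Set.mem_ofPred_eq] at hc ⊢
    exact ⟨weaklyCompatible_singleton_iff.2 (by rwa [extendColor_of_mem _ hV]),
      self_mem_components_singleton V⟩
  · funext ⟨W, hW⟩
    obtain rfl := Finset.mem_singleton.1 hW
    rfl

lemma connectedCount_empty : connectedCount T ∅ = 0 := by
  simp [connectedCount, components_empty]

lemma sum_weaklyCompatible_eq (a : Blocks → ℝ) (π : Blocks) :
    (∑ χ : {V : Finset ℕ // V ∈ π} → Fin N,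
      if WeaklyCompatible T π (extendColor π χ) then
        ∏ τ ∈ components π (extendColor π χ), a τ
      else 0) = connectedCount T π * a π + disconnectedSum T a π := by
  rw [connectedCount, Finset.natCast_card_filter, Finset.sum_mul, disconnectedSum,
    ← Finset.sum_add_distrib]
  refine Finset.sum_congr rfl fun χ _ => ?_
  by_cases hw : WeaklyCompatible T π (extendColor π χ)
  · by_cases hc : π ∈ components π (extendColor π χ)
    · simp [hw, components_eq_singleton_self hc]
    · simp [hw, hc]
  · simp [hw]

lemma eq_cumulantRHS_iff {n : ℕ} (hn : n ≠ 0) (a : Blocks → ℝ) (π : Blocks) :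
    a π = cumulantRHS n T a π ↔ a π * cumulantDenom T n π = disconnectedSum T a π := by
  rw [cumulantRHS, sum_weaklyCompatible_eq, eq_div_iff (pow_ne_zero _ (Nat.cast_ne_zero.2 hn)),
    cumulantDenom, mul_sub]
  constructor <;> intro h <;> linarith

lemma disconnectedSum_congr {a a' : Blocks → ℝ} {π : Blocks} (h : ∀ τ ⊂ π, a τ = a' τ) :
    disconnectedSum T a π = disconnectedSum T a' π := by
  refine Finset.sum_congr rfl fun χ _ => ?_
  split_ifs with hc
  · exact Finset.prod_congr rfl fun τ hτ => h τ (ssubset_of_mem_components hc.2 hτ)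
  · rfl

lemma disconnectedSum_nonneg {a : Blocks → ℝ} {π : Blocks} (h : ∀ τ ⊂ π, 0 ≤ a τ) :
    0 ≤ disconnectedSum T a π := by
  refine Finset.sum_nonneg fun χ _ => ?_
  split_ifs with hc
  · exact Finset.prod_nonneg fun τ hτ => h τ (ssubset_of_mem_components hc.2 hτ)
  · exact le_rfl

lemma disconnectedSum_singleton (a : Blocks → ℝ) (V : Finset ℕ) :
    disconnectedSum T a {V} = 0 :=
  Finset.sum_eq_zero fun _ _ => if_neg fun h => h.2 (self_mem_components_singleton V)

variable {T} {n : ℕ} (hn : {j : Fin N | [j] ∈ T}.ncard = n)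
include hn

lemma cumulantDenom_pos (hn2 : 2 ≤ n) {π : Blocks} (hNC : IsNC π) (h1 : π.card ≠ 1) :
    0 < cumulantDenom T n π := by
  rcases π.eq_empty_or_nonempty with rfl | hπ
  · simp [cumulantDenom, connectedCount_empty]
  have hcount : (connectedCount T π : ℝ) ≤ n := by
    exact_mod_cast hn ▸ connectedCount_le_ncard T hNC hπ
  have hpow : (n : ℝ) < (n : ℝ) ^ π.card := by
    simpa using pow_lt_pow_right₀ (by exact_mod_cast hn2 : (1 : ℝ) < n)
      (by have := hπ.card_pos; omega : 1 < π.card)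
  rw [cumulantDenom]
  linarith

lemma eq_cumulantRHS_of_card_eq_one (hn0 : n ≠ 0) (a : Blocks → ℝ) {π : Blocks}
    (h1 : π.card = 1) : a π = cumulantRHS n T a π := by
  obtain ⟨V, rfl⟩ := Finset.card_eq_one.1 h1
  rw [eq_cumulantRHS_iff T hn0, disconnectedSum_singleton, cumulantDenom, Finset.card_singleton,
    connectedCount_singleton, hn, pow_one, sub_self, mul_zero]

end Counting

section Coefficients

variable {N : ℕ} [NeZero N] {T : Set (List (Fin N))} {n : ℕ}

noncomputable def cumulantCoeff (n : ℕ) (T : Set (List (Fin N))) (π : Blocks) : ℝ :=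
  if π.card = 1 then 1 else
    (∑ χ : {V : Finset ℕ // V ∈ π} → Fin N,
      if _ : WeaklyCompatible T π (extendColor π χ) ∧ π ∉ components π (extendColor π χ) then
        ∏ τ ∈ (components π (extendColor π χ)).attach, cumulantCoeff n T τ.1
      else 0) / cumulantDenom T n π
termination_by π.card
decreasing_by exact Finset.card_lt_card (ssubset_of_mem_components ‹_ ∧ _›.2 τ.2)

lemma cumulantCoeff_of_card_ne_one {π : Blocks} (h1 : π.card ≠ 1) :
    cumulantCoeff n T π = disconnectedSum T (cumulantCoeff n T) π / cumulantDenom T n π := by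
  rw [cumulantCoeff, if_neg h1, disconnectedSum]
  congr 1
  refine Finset.sum_congr rfl fun χ _ => ?_
  split_ifs
  · exact Finset.prod_attach _ (cumulantCoeff n T)
  · rfl

variable (hn2 : 2 ≤ n) (hn : {j : Fin N | [j] ∈ T}.ncard = n)
include hn2 hn

theorem satisfiesFP_cumulantCoeff : SatisfiesFP n T (cumulantCoeff n T) := by
  have hn0 : n ≠ 0 := by omega
  refine ⟨fun π _ h1 => by rw [cumulantCoeff, if_pos h1], fun π hNC => ?_⟩
  by_cases h1 : π.card = 1
  · exact eq_cumulantRHS_of_card_eq_one hn hn0 _ h1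
  rw [eq_cumulantRHS_iff T hn0, cumulantCoeff_of_card_ne_one h1]
  exact div_mul_cancel₀ _ (cumulantDenom_pos hn hn2 hNC h1).ne'

lemma SatisfiesFP.eq_div {a : Blocks → ℝ} (ha : SatisfiesFP n T a) {π : Blocks} (hNC : IsNC π)
    (h1 : π.card ≠ 1) : a π = disconnectedSum T a π / cumulantDenom T n π :=
  eq_div_of_mul_eq (cumulantDenom_pos hn hn2 hNC h1).ne'
    ((eq_cumulantRHS_iff T (by omega) a π).1 (ha.2 π hNC))

theorem SatisfiesFP.unique {a a' : Blocks → ℝ} (ha : SatisfiesFP n T a)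
    (ha' : SatisfiesFP n T a') (π : Blocks) (hNC : IsNC π) : a π = a' π := by
  induction π using Finset.strongInduction with
  | H π ih =>
    by_cases h1 : π.card = 1
    · rw [ha.1 π hNC h1, ha'.1 π hNC h1]
    rw [ha.eq_div hn2 hn hNC h1, ha'.eq_div hn2 hn hNC h1,
      disconnectedSum_congr T fun τ hτ => ih τ hτ (hNC.subset hτ.subset)]

theorem SatisfiesFP.nonneg {a : Blocks → ℝ} (ha : SatisfiesFP n T a) (π : Blocks)
    (hNC : IsNC π) : 0 ≤ a π := by
  induction π using Finset.strongInduction with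
  | H π ih =>
    by_cases h1 : π.card = 1
    · rw [ha.1 π hNC h1]
      exact zero_le_one
    rw [ha.eq_div hn2 hn hNC h1]
    exact div_nonneg (disconnectedSum_nonneg T fun τ hτ => ih τ hτ (hNC.subset hτ.subset))
      (cumulantDenom_pos hn hn2 hNC h1).le

end Coefficients

theorem stmt9_general {N : ℕ} [NeZero N] (n : ℕ) (hn2 : 2 ≤ n)
    (T : Set (List (Fin N)))
    (hn : {j : Fin N | [j] ∈ T}.ncard = n) :
    (∃ a : Blocks → ℝ, SatisfiesFP n T a) ∧
    (∀ a a' : Blocks → ℝ, SatisfiesFP n T a → SatisfiesFP n T a' →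
      ∀ π : Blocks, IsNC π → a π = a' π) ∧
    (∀ a : Blocks → ℝ, SatisfiesFP n T a → ∀ π : Blocks, IsNC π → 0 ≤ a π) :=
  ⟨⟨cumulantCoeff n T, satisfiesFP_cumulantCoeff hn2 hn⟩,
    fun _ _ ha ha' => ha.unique hn2 hn ha', fun _ ha => ha.nonneg hn2 hn⟩

/-- For a rooted subtree `T` of `T_{N,free}` whose root has `n ≥ 2` neighbors,
there exists a family of coefficients `α_{T,π}` with `α_{T,π} = 1` when `|π| = 1`
satisfying the fixed-point identity
`α_{T,π} = n^{−|π|} Σ_{χ ∈ X_w(π,T)} Π_{χ-components π'} α_{T,π'}`;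
it is unique (on non-crossing partitions), and nonnegative. -/
theorem stmt9 {N : ℕ} [NeZero N] (n : ℕ) (hn2 : 2 ≤ n)
    (T : Set (List (Fin N))) (hT : IsRootedSubtree T)
    (hn : {j : Fin N | [j] ∈ T}.ncard = n) :
    (∃ a : Blocks → ℝ, SatisfiesFP n T a) ∧
    (∀ a a' : Blocks → ℝ, SatisfiesFP n T a → SatisfiesFP n T a' →
      ∀ π : Blocks, IsNC π → a π = a' π) ∧
    (∀ a : Blocks → ℝ, SatisfiesFP n T a → ∀ π : Blocks, IsNC π → 0 ≤ a π) :=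
  stmt9_general n hn2 T hn
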